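/- Suppose f : I → I is continuous on an interval I ⊆ ℝ and there exist three distinct points x, y, z ∈ I with f(x) = y, f(y) = z, f(z) = x (a period-3 orbit). Then for every n ∈ ℕ, n ≥ 1, there exists a point of f with minimal period n. -/

import Mathlib

/-!
Let `p` be the point of the 3-cycle lying between the other two, `q = f p`, `r = f q`, and
`J = [[p, q]]`, `K = [[p, r]]`, which meet only at `p`. By the intermediate value theorem
`f(J) ⊇ J ∪ K` and `f(K) ⊇ J`. Pulling intervals back one step at a time along the loop
`J → J → ⋯ → J → K → J` of length `n` gives a subinterval `A ⊆ J` with `f^n(A) ⊇ A` whose points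
are in `K` at time `n - 1` and in `J` before. A fixed point `w ∈ A` of `f^n` has minimal period `n`:
a shorter period would keep the whole orbit in `J`, forcing `f^(n-1) w = p`, hence `w = q` and
`f w = r ∉ J`.
-/

open Set Function

theorem mem_uIcc_or_mem_uIcc_of_notMem_uIcc {α : Type*} [LinearOrder α] {a b c : α}
    (h : b ∉ uIcc a c) : c ∈ uIcc a b ∨ a ∈ uIcc b c := by
  simp only [mem_uIcc] at *
  grind

theorem mem_uIoo_or_mem_uIoo_or_mem_uIoo {α : Type*} [LinearOrder α] {a b c : α}
    (hab : a ≠ b) (hbc : b ≠ c) (hac : a ≠ c) : a ∈ uIoo b c ∨ b ∈ uIoo c a ∨ c ∈ uIoo a b := by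
  simp only [uIoo_eq_union, mem_union, mem_Ioo]
  grind

theorem uIcc_inter_uIcc_subset_singleton {α : Type*} [LinearOrder α] {p q r : α}
    (hp : p ∈ uIoo q r) : uIcc p q ∩ uIcc p r ⊆ {p} := by
  intro x hx
  simp only [uIoo_eq_union, mem_union, mem_Ioo, mem_inter_iff, mem_uIcc, mem_singleton_iff] at *
  grind

theorem exists_Icc_subset_image_eq_uIcc {f : ℝ → ℝ} {p q : ℝ} (hpq : p ≤ q)
    (hf : ContinuousOn f (Icc p q)) :
    ∃ s t, s ≤ t ∧ Icc s t ⊆ Icc p q ∧ f '' Icc s t = uIcc (f p) (f q) := by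
  -- `s` is the last visit of `f p` in `[p, q]` and `t` the first visit of `f q` after `s`,
  -- so `f` takes neither value inside `(s, t)`.
  set S := Icc p q ∩ f ⁻¹' {f p}
  have hsS : sSup S ∈ S :=
    (hf.preimage_isClosed_of_isClosed isClosed_Icc isClosed_singleton).csSup_mem
      ⟨p, left_mem_Icc.2 hpq, rfl⟩ ⟨q, fun x hx => hx.1.2⟩
  set s := sSup S
  set T := Icc s q ∩ f ⁻¹' {f q}
  have hTbdd : BddBelow T := ⟨s, fun x hx => hx.1.1⟩
  have htT : sInf T ∈ T := ((hf.mono (Icc_subset_Icc_left hsS.1.1)).preimage_isClosed_of_isClosed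
    isClosed_Icc isClosed_singleton).csInf_mem ⟨q, ⟨hsS.1.2, le_rfl⟩, rfl⟩ hTbdd
  set t := sInf T
  have hsub : Icc s t ⊆ Icc p q := Icc_subset_Icc hsS.1.1 htT.1.2
  refine ⟨s, t, htT.1.1, hsub, (image_subset_iff.2 fun w hw => ?_).antisymm ?_⟩
  · by_contra hfw
    rcases mem_uIcc_or_mem_uIcc_of_notMem_uIcc hfw with hq | hp
    · obtain ⟨x, hx, hfx⟩ := (hf.mono (Icc_subset_Icc_right hw.2 |>.trans hsub)).surjOn_uIcc
        (left_mem_Icc.2 hw.1) (right_mem_Icc.2 hw.1) (hsS.2 ▸ hq)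
      have hxw : x = w := le_antisymm hx.2
        (hw.2.trans (csInf_le hTbdd ⟨⟨hx.1, hx.2.trans (hw.2.trans htT.1.2)⟩, hfx⟩))
      exact hfw (hxw ▸ hfx ▸ right_mem_uIcc)
    · obtain ⟨x, hx, hfx⟩ := (hf.mono (Icc_subset_Icc_left hw.1 |>.trans hsub)).surjOn_uIcc
        (left_mem_Icc.2 hw.2) (right_mem_Icc.2 hw.2) (htT.2 ▸ hp)
      have hxs : x ≤ s := le_csSup ⟨q, fun y hy => hy.1.2⟩ ⟨hsub ⟨hw.1.trans hx.1, hx.2⟩, hfx⟩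
      have hxw : x = w := le_antisymm (hxs.trans hw.1) hx.1
      exact hfw (hxw ▸ hfx ▸ left_mem_uIcc)
  · rw [← hsS.2, ← htT.2]
    exact (hf.mono hsub).surjOn_uIcc (left_mem_Icc.2 htT.1.1) (right_mem_Icc.2 htT.1.1)

theorem exists_uIcc_subset_image_eq {f : ℝ → ℝ} {a b c d : ℝ} (hf : ContinuousOn f (uIcc a b))
    (h : SurjOn f (uIcc a b) (uIcc c d)) :
    ∃ s t, uIcc s t ⊆ uIcc a b ∧ f '' uIcc s t = uIcc c d := by
  obtain ⟨p, hp, rfl⟩ := h left_mem_uIcc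
  obtain ⟨q, hq, rfl⟩ := h right_mem_uIcc
  wlog hpq : p ≤ q generalizing p q
  · rw [uIcc_comm (f p)] at h ⊢
    exact this q hq p hp h (le_of_not_ge hpq)
  have hsub : Icc p q ⊆ uIcc a b := uIcc_of_le hpq ▸ uIcc_subset_uIcc hp hq
  obtain ⟨s, t, hst, hst_sub, himg⟩ := exists_Icc_subset_image_eq_uIcc hpq (hf.mono hsub)
  exact ⟨s, t, uIcc_of_le hst ▸ hst_sub.trans hsub, uIcc_of_le hst ▸ himg⟩

theorem exists_uIcc_iterate_mapsTo_surjOn {f : ℝ → ℝ} (n : ℕ) (u v : ℕ → ℝ)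
    (hf : ∀ k < n, ContinuousOn f (uIcc (u k) (v k)))
    (hsurj : ∀ k < n, SurjOn f (uIcc (u k) (v k)) (uIcc (u (k + 1)) (v (k + 1)))) :
    ∃ a b, (∀ k ≤ n, MapsTo f^[k] (uIcc a b) (uIcc (u k) (v k))) ∧
      SurjOn f^[n] (uIcc a b) (uIcc (u n) (v n)) := by
  induction n generalizing u v with
  | zero =>
    refine ⟨u 0, v 0, fun k hk => ?_, surjOn_id _⟩
    obtain rfl := Nat.le_zero.1 hk
    exact mapsTo_id _
  | succ n ih =>
    obtain ⟨a, b, hmaps, hsurj_n⟩ := ih (u ∘ Nat.succ) (v ∘ Nat.succ)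
      (fun k hk => hf (k + 1) (by omega)) (fun k hk => hsurj (k + 1) (by omega))
    obtain ⟨s, t, hst, himg⟩ := exists_uIcc_subset_image_eq (hf 0 n.succ_pos)
      ((hsurj 0 n.succ_pos).mono subset_rfl (hmaps 0 n.zero_le))
    refine ⟨s, t, ?_, ?_⟩
    · rintro (_ | k) hk
      · exact hst
      · rw [iterate_succ]
        exact (hmaps k (by omega)).comp (himg ▸ mapsTo_image f _)
    · rw [iterate_succ]
      exact hsurj_n.comp (himg ▸ surjOn_image f _)

theorem ContinuousOn.iterate_of_mapsTo {α : Type*} [TopologicalSpace α] {f : α → α} {s : Set α}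
    {t : ℕ → Set α} {n : ℕ} (hf : ∀ k < n, ContinuousOn f (t k))
    (hmaps : ∀ k < n, MapsTo f^[k] s (t k)) : ContinuousOn f^[n] s := by
  induction n with
  | zero => exact continuousOn_id
  | succ n ih =>
    rw [iterate_succ']
    exact (hf n n.lt_succ_self).comp (ih (fun k hk => hf k (by omega))
      (fun k hk => hmaps k (by omega))) (hmaps n n.lt_succ_self)

theorem iterate_mem_of_minimalPeriod_lt {α : Type*} {f : α → α} {x : α} {s : Set α} {n : ℕ}
    (hpos : 0 < minimalPeriod f x) (hlt : minimalPeriod f x < n)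
    (hs : ∀ k, k + 1 < n → f^[k] x ∈ s) (k : ℕ) : f^[k] x ∈ s := by
  rw [← iterate_mod_minimalPeriod_eq]
  exact hs _ (by have := Nat.mod_lt k hpos; omega)

theorem IsPeriodicPt.minimalPeriod_eq_of_iterate_mem {α : Type*} {f : α → α} {J K : Set α}
    {p w : α} {n : ℕ} (hJK : J ∩ K ⊆ {p}) (hffp : f (f p) ∉ J) (hn : 0 < n)
    (hw : IsPeriodicPt f n w) (hJ : ∀ k, k + 1 < n → f^[k] w ∈ J) (hK : f^[n - 1] w ∈ K) :
    minimalPeriod f w = n := by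
  by_contra hne
  have hlt := (hw.minimalPeriod_le hn).lt_of_ne hne
  have hJ_all := iterate_mem_of_minimalPeriod_lt (hw.minimalPeriod_pos hn) hlt hJ
  have hlast : f^[n - 1] w = p := hJK ⟨hJ_all _, hK⟩
  have hwp : w = f p := by
    rw [← hlast, ← iterate_succ_apply' f, Nat.succ_eq_add_one, Nat.sub_add_cancel hn]
    exact hw.symm
  exact hffp (hwp ▸ hJ_all 1)

theorem exists_mem_uIcc_minimalPeriod_eq_of_horseshoe {f : ℝ → ℝ} {p q r : ℝ}
    (hfJ : ContinuousOn f (uIcc p q)) (hfK : ContinuousOn f (uIcc p r))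
    (hJJ : SurjOn f (uIcc p q) (uIcc p q)) (hJK : SurjOn f (uIcc p q) (uIcc p r))
    (hKJ : SurjOn f (uIcc p r) (uIcc p q)) (hinter : uIcc p q ∩ uIcc p r ⊆ {p})
    (hffp : f (f p) ∉ uIcc p q) {n : ℕ} (hn : 0 < n) :
    ∃ w ∈ uIcc p q, minimalPeriod f w = n := by
  obtain rfl | hn := (Nat.one_le_iff_ne_zero.2 hn.ne').eq_or_lt
  · obtain ⟨w, hw, hfix⟩ := exists_mem_uIcc_isFixedPt_of_surjOn hfJ hJJ
    exact ⟨w, hw, minimalPeriod_eq_one_iff_isFixedPt.2 hfix⟩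
  -- The itinerary stays in `J = [[p, q]]` except at time `n - 1`, when it visits `K = [[p, r]]`.
  set v : ℕ → ℝ := fun k => if k + 1 = n then r else q
  have hv_of_ne {k : ℕ} (hk : k + 1 ≠ n) : v k = q := if_neg hk
  have hv_pred : v (n - 1) = r := if_pos (by omega)
  have hfv (k : ℕ) : ContinuousOn f (uIcc p (v k)) := by
    unfold v; split_ifs
    exacts [hfK, hfJ]
  have hsurj (k : ℕ) : SurjOn f (uIcc p (v k)) (uIcc p (v (k + 1))) := by
    unfold v; split_ifs with hk hk' hk'
    · omega
    exacts [hKJ, hJK, hJJ]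
  obtain ⟨a, b, hmaps, hsurj_n⟩ :=
    exists_uIcc_iterate_mapsTo_surjOn n (fun _ => p) v (fun k _ => hfv k) (fun k _ => hsurj k)
  have hA : uIcc a b ⊆ uIcc p q := hv_of_ne (k := 0) (by omega) ▸ hmaps 0 n.zero_le
  obtain ⟨w, hw, hfix⟩ := exists_mem_uIcc_isFixedPt_of_surjOn
    (ContinuousOn.iterate_of_mapsTo (fun k _ => hfv k) fun k hk => hmaps k hk.le)
    (hsurj_n.mono subset_rfl (hv_of_ne (k := n) (by omega) ▸ hA))
  refine ⟨w, hA hw, IsPeriodicPt.minimalPeriod_eq_of_iterate_mem hinter hffp (by omega) hfix ?_ ?_⟩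
  · intro k hk
    exact hv_of_ne hk.ne ▸ hmaps k (by omega) hw
  · exact hv_pred ▸ hmaps (n - 1) (by omega) hw

theorem exists_mem_uIcc_minimalPeriod_eq_of_cycle {f : ℝ → ℝ} {p q r : ℝ} (hp : p ∈ uIoo q r)
    (hf : ContinuousOn f (uIcc q r)) (hpq : f p = q) (hqr : f q = r) (hrp : f r = p)
    {n : ℕ} (hn : 0 < n) : ∃ w ∈ uIcc q r, minimalPeriod f w = n := by
  have hJ : uIcc p q ⊆ uIcc q r := uIcc_subset_uIcc (uIoo_subset_uIcc_self hp) left_mem_uIcc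
  have hK : uIcc p r ⊆ uIcc q r := uIcc_subset_uIcc (uIoo_subset_uIcc_self hp) right_mem_uIcc
  have hJ_surj : SurjOn f (uIcc p q) (uIcc q r) := by
    simpa only [hpq, hqr] using (hf.mono hJ).surjOn_uIcc left_mem_uIcc right_mem_uIcc
  have hK_surj : SurjOn f (uIcc p r) (uIcc p q) := by
    simpa only [hpq, hrp, uIcc_comm q] using (hf.mono hK).surjOn_uIcc left_mem_uIcc right_mem_uIcc
  have hinter := uIcc_inter_uIcc_subset_singleton hp
  have hffp : f (f p) ∉ uIcc p q := by
    rw [hpq, hqr]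
    intro hrJ
    exact right_notMem_uIoo (hinter ⟨hrJ, right_mem_uIcc⟩ ▸ hp)
  obtain ⟨w, hw, hmin⟩ := exists_mem_uIcc_minimalPeriod_eq_of_horseshoe (hf.mono hJ) (hf.mono hK)
    (hJ_surj.mono subset_rfl hJ) (hJ_surj.mono subset_rfl hK) hK_surj hinter hffp hn
  exact ⟨w, hJ hw, hmin⟩

theorem period_three_implies_all_periods_general (I : Set ℝ) (hI : I.OrdConnected)
    (f : ℝ → ℝ) (hf : ContinuousOn f I)
    (x y z : ℝ) (hx : x ∈ I) (hy : y ∈ I) (hz : z ∈ I)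
    (hxy : x ≠ y) (hyz : y ≠ z) (hxz : x ≠ z)
    (h1 : f x = y) (h2 : f y = z) (h3 : f z = x) :
    ∀ n : ℕ, 1 ≤ n → ∃ w ∈ I, Function.minimalPeriod f w = n := by
  obtain ⟨p, q, r, hp, hpq, hqr, hrp, hq, hr⟩ :
      ∃ p q r, p ∈ uIoo q r ∧ f p = q ∧ f q = r ∧ f r = p ∧ q ∈ I ∧ r ∈ I := by
    rcases mem_uIoo_or_mem_uIoo_or_mem_uIoo hxy hyz hxz with h | h | h
    exacts [⟨x, y, z, h, h1, h2, h3, hy, hz⟩, ⟨y, z, x, h, h2, h3, h1, hz, hx⟩,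
      ⟨z, x, y, h, h3, h1, h2, hx, hy⟩]
  intro n hn
  obtain ⟨w, hw, hmin⟩ :=
    exists_mem_uIcc_minimalPeriod_eq_of_cycle hp (hf.mono (hI.uIcc_subset hq hr)) hpq hqr hrp hn
  exact ⟨w, hI.uIcc_subset hq hr hw, hmin⟩

/-- Period three implies all periods (Li–Yorke / Sharkovskii special case):
if a continuous self-map of an interval `I ⊆ ℝ` has a period-3 orbit, then for every
`n ≥ 1` it has a point of minimal period `n`. -/
theorem period_three_implies_all_periods (I : Set ℝ) (hI : I.OrdConnected)
    (f : ℝ → ℝ) (hf : ContinuousOn f I) (hmaps : Set.MapsTo f I I)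
    (x y z : ℝ) (hx : x ∈ I) (hy : y ∈ I) (hz : z ∈ I)
    (hxy : x ≠ y) (hyz : y ≠ z) (hxz : x ≠ z)
    (h1 : f x = y) (h2 : f y = z) (h3 : f z = x) :
    ∀ n : ℕ, 1 ≤ n → ∃ w ∈ I, Function.minimalPeriod f w = n :=
  period_three_implies_all_periods_general I hI f hf x y z hx hy hz hxy hyz hxz h1 h2 h3
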